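/- arXiv:1409.0676 — 4 statements merged into one kernel-verified Lean document; each statement's English description precedes it below -/
import Mathlib

section
/- Let 𝒞 be a polyhedral complex in ℝ^r and let τ₁, …, τ_n ∈ 𝒞. Then the set of polyhedra of 𝒞 containing all the τ_i is either empty or has a unique smallest element σ with respect to the face relation; moreover in the latter case the intersection of the polyhedral stars Ω_{τ₁} ∩ ⋯ ∩ Ω_{τ_n} equals Ω_σ. -/
open Set

noncomputable section

abbrev Vec (r : ℕ) : Type := Fin r → ℝ

/-- A (convex) polyhedron in `ℝ^r`: a finite intersection of closed half-spaces. -/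
def IsPolyhedron {r : ℕ} (σ : Set (Vec r)) : Prop :=
  ∃ (n : ℕ) (f : Fin n → (Vec r →ₗ[ℝ] ℝ)) (c : Fin n → ℝ),
    σ = {x | ∀ i, f i x ≤ c i}

/-- `τ` is a face of `σ`: either `σ` itself, or the subset of `σ` where a linear
functional bounded above on `σ` attains a given bound. -/
def IsFaceOf {r : ℕ} (τ σ : Set (Vec r)) : Prop :=
  τ = σ ∨ ∃ (g : Vec r →ₗ[ℝ] ℝ) (c : ℝ),
    (∀ x ∈ σ, g x ≤ c) ∧ τ = {x ∈ σ | g x = c}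

/-- A polyhedral complex in `ℝ^r`: a finite set of convex polyhedra, closed under
taking faces, such that the intersection of any two members is a face of both. -/
structure PolyComplex (r : ℕ) where
  polys : Set (Set (Vec r))
  finite : polys.Finite
  poly_mem : ∀ σ ∈ polys, IsPolyhedron σ
  face_mem : ∀ σ ∈ polys, ∀ τ, IsFaceOf τ σ → τ ∈ polys
  inter_face : ∀ σ ∈ polys, ∀ τ ∈ polys, IsFaceOf (σ ∩ τ) σ

/-- The support of a polyhedral complex. -/
def PolyComplex.support {r : ℕ} (C : PolyComplex r) : Set (Vec r) :=
  ⋃ σ ∈ C.polys, σ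

/-- The relative interior of a polyhedron: the polyhedron minus all its proper faces. -/
def relint {r : ℕ} (σ : Set (Vec r)) : Set (Vec r) :=
  {x ∈ σ | ∀ τ, IsFaceOf τ σ → τ ≠ σ → x ∉ τ}

/-- The polyhedral star of `σ` in `C`: the union of the relative interiors of all
members of `C` having `σ` as a face. -/
def polyStar {r : ℕ} (C : PolyComplex r) (σ : Set (Vec r)) : Set (Vec r) :=
  ⋃ τ ∈ {τ ∈ C.polys | IsFaceOf σ τ}, relint τ

/-- `Ω` is an open subset of the support of `C` (subspace topology). -/
def OpenInSupport {r : ℕ} (C : PolyComplex r) (Ω : Set (Vec r)) : Prop :=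
  ∃ U : Set (Vec r), IsOpen U ∧ Ω = U ∩ C.support

/-- `S` is star shaped with centre `z`. -/
def StarShapedWith {r : ℕ} (z : Vec r) (S : Set (Vec r)) : Prop :=
  ∀ x ∈ S, ∀ t ∈ Icc (0 : ℝ) 1, z + t • (x - z) ∈ S

/-- `Ω` is polyhedrally star shaped with centre `z`: there is a polyhedral complex `D`
such that `Ω` is an open subset of `|D|` and `σ ∩ Ω` is star shaped with centre `z`
for every maximal `σ ∈ D`. -/
def PolyStarShaped {r : ℕ} (z : Vec r) (Ω : Set (Vec r)) : Prop :=
  ∃ D : PolyComplex r, OpenInSupport D Ω ∧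
    ∀ σ ∈ D.polys, (∀ τ ∈ D.polys, IsFaceOf σ τ → τ = σ) →
      StarShapedWith z (σ ∩ Ω)

/-!
Within a polyhedral complex the face relation is just inclusion, and the complex is closed
under intersections. Hence the members having all `τᵢ` as faces have a least element, namely
their intersection `σ₀`. Every point of the support lies in the relative interior of at most
one member `ρ`, and it lies in `Ω_σ` iff `σ` is a face of `ρ`; so a point lies in every
`Ω_{τᵢ}` iff its carrier `ρ` contains all `τᵢ`, i.e. iff `σ₀` is a face of `ρ`.
-/

section

variable {r : ℕ}

theorem IsFaceOf.subset {τ σ : Set (Vec r)} (h : IsFaceOf τ σ) : τ ⊆ σ := by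
  rcases h with rfl | ⟨g, c, -, rfl⟩
  · exact subset_rfl
  · exact fun x hx => hx.1

theorem IsFaceOf.antisymm {τ σ : Set (Vec r)} (h₁ : IsFaceOf τ σ) (h₂ : IsFaceOf σ τ) :
    τ = σ :=
  h₁.subset.antisymm h₂.subset

namespace PolyComplex

variable (C : PolyComplex r)

theorem mem_of_isFaceOf {τ σ : Set (Vec r)} (hσ : σ ∈ C.polys) (h : IsFaceOf τ σ) :
    τ ∈ C.polys :=
  C.face_mem σ hσ τ h

theorem isFaceOf_of_subset {τ σ : Set (Vec r)} (hτ : τ ∈ C.polys) (hσ : σ ∈ C.polys)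
    (h : τ ⊆ σ) : IsFaceOf τ σ := by
  simpa [inter_eq_right.mpr h] using C.inter_face σ hσ τ hτ

theorem inter_mem {τ σ : Set (Vec r)} (hτ : τ ∈ C.polys) (hσ : σ ∈ C.polys) :
    τ ∩ σ ∈ C.polys :=
  C.mem_of_isFaceOf hτ (C.inter_face τ hτ σ hσ)

theorem sInter_mem {S : Set (Set (Vec r))} (hS : S ⊆ C.polys) (hne : S.Nonempty) :
    ⋂₀ S ∈ C.polys := by
  induction S, C.finite.subset hS using Set.Finite.induction_on with
  | empty => exact absurd hne not_nonempty_empty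
  | @insert σ S _ _ ih =>
    rcases S.eq_empty_or_nonempty with rfl | hSne
    · simpa using hS (mem_insert σ ∅)
    · rw [sInter_insert]
      exact C.inter_mem (hS (mem_insert σ S)) (ih ((subset_insert σ S).trans hS) hSne)

theorem eq_of_mem_relint {ρ ρ' : Set (Vec r)} {x : Vec r} (hρ : ρ ∈ C.polys)
    (hρ' : ρ' ∈ C.polys) (hx : x ∈ relint ρ) (hx' : x ∈ relint ρ') : ρ = ρ' := by
  have inter_eq_left : ρ ∩ ρ' = ρ := by
    by_contra hne
    exact hx.2 _ (C.inter_face ρ hρ ρ' hρ') hne ⟨hx.1, hx'.1⟩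
  have inter_eq_right : ρ ∩ ρ' = ρ' := by
    by_contra hne
    exact hx'.2 _ (inter_comm ρ' ρ ▸ C.inter_face ρ' hρ' ρ hρ) hne ⟨hx.1, hx'.1⟩
  rw [← inter_eq_left, inter_eq_right]

end PolyComplex

theorem mem_polyStar {C : PolyComplex r} {σ : Set (Vec r)} {x : Vec r} :
    x ∈ polyStar C σ ↔ ∃ ρ ∈ C.polys, IsFaceOf σ ρ ∧ x ∈ relint ρ := by
  simp only [polyStar, mem_iUnion, mem_ofPred_eq, exists_prop, and_assoc]

theorem mem_polyStar_iff_of_mem_relint {C : PolyComplex r} {σ ρ : Set (Vec r)} {x : Vec r}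
    (hρ : ρ ∈ C.polys) (hx : x ∈ relint ρ) : x ∈ polyStar C σ ↔ IsFaceOf σ ρ := by
  refine ⟨fun hσ => ?_, fun h => mem_polyStar.mpr ⟨ρ, hρ, h, hx⟩⟩
  obtain ⟨ρ', hρ', hσρ', hx'⟩ := mem_polyStar.mp hσ
  rwa [C.eq_of_mem_relint hρ' hρ hx' hx] at hσρ'

theorem polyStar_subset_polyStar_of_isFaceOf {C : PolyComplex r} {τ σ : Set (Vec r)}
    (hσ : σ ∈ C.polys) (h : IsFaceOf τ σ) : polyStar C σ ⊆ polyStar C τ := by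
  intro x hx
  obtain ⟨ρ, hρ, hσρ, hxρ⟩ := mem_polyStar.mp hx
  exact mem_polyStar.mpr ⟨ρ, hρ,
    C.isFaceOf_of_subset (C.mem_of_isFaceOf hσ h) hρ (h.subset.trans hσρ.subset), hxρ⟩

end

theorem polyStar_inter_general {r n : ℕ} (hn : 0 < n) (C : PolyComplex r)
    (τ : Fin n → Set (Vec r)) :
    {σ | σ ∈ C.polys ∧ ∀ i, IsFaceOf (τ i) σ} = ∅ ∨
    ∃ σ₀,
      (σ₀ ∈ C.polys ∧ (∀ i, IsFaceOf (τ i) σ₀) ∧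
        ∀ σ ∈ C.polys, (∀ i, IsFaceOf (τ i) σ) → IsFaceOf σ₀ σ) ∧
      (∀ σ₁, (σ₁ ∈ C.polys ∧ (∀ i, IsFaceOf (τ i) σ₁) ∧
        ∀ σ ∈ C.polys, (∀ i, IsFaceOf (τ i) σ) → IsFaceOf σ₁ σ) → σ₁ = σ₀) ∧
      (⋂ i, polyStar C (τ i)) = polyStar C σ₀ := by
  set S := {σ | σ ∈ C.polys ∧ ∀ i, IsFaceOf (τ i) σ}
  refine S.eq_empty_or_nonempty.imp id fun hne => ?_
  have hσ₀ : ⋂₀ S ∈ C.polys := C.sInter_mem (fun σ hσ => hσ.1) hne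
  have hτσ₀ : ∀ i, IsFaceOf (τ i) (⋂₀ S) := fun i =>
    C.isFaceOf_of_subset (C.mem_of_isFaceOf hne.some_mem.1 (hne.some_mem.2 i)) hσ₀
      (subset_sInter fun σ hσ => (hσ.2 i).subset)
  have least : ∀ σ ∈ C.polys, (∀ i, IsFaceOf (τ i) σ) → IsFaceOf (⋂₀ S) σ :=
    fun σ hσ hτσ => C.isFaceOf_of_subset hσ₀ hσ (sInter_subset_of_mem ⟨hσ, hτσ⟩)
  refine ⟨⋂₀ S, ⟨hσ₀, hτσ₀, least⟩,
    fun σ₁ ⟨hσ₁, hτσ₁, least₁⟩ => (least₁ _ hσ₀ hτσ₀).antisymm (least σ₁ hσ₁ hτσ₁), ?_⟩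
  refine (subset_iInter fun i => polyStar_subset_polyStar_of_isFaceOf hσ₀ (hτσ₀ i)).antisymm' ?_
  intro x hx
  obtain ⟨ρ, hρ, -, hxρ⟩ := mem_polyStar.mp (mem_iInter.mp hx ⟨0, hn⟩)
  rw [mem_polyStar_iff_of_mem_relint hρ hxρ]
  exact least ρ hρ fun i => (mem_polyStar_iff_of_mem_relint hρ hxρ).mp (mem_iInter.mp hx i)

/-- Given `τ₁,…,τₙ ∈ 𝒞`, the set of polyhedra of `𝒞` containing all the
`τᵢ` as faces is either empty or has a unique smallest element `σ₀` with respect to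
the face relation, and in the latter case `⋂ᵢ Ω_{τᵢ} = Ω_{σ₀}`. -/
theorem polyStar_inter {r n : ℕ} (hn : 0 < n) (C : PolyComplex r)
    (τ : Fin n → Set (Vec r)) (hτ : ∀ i, τ i ∈ C.polys) :
    {σ | σ ∈ C.polys ∧ ∀ i, IsFaceOf (τ i) σ} = ∅ ∨
    ∃ σ₀,
      (σ₀ ∈ C.polys ∧ (∀ i, IsFaceOf (τ i) σ₀) ∧
        ∀ σ ∈ C.polys, (∀ i, IsFaceOf (τ i) σ) → IsFaceOf σ₀ σ) ∧
      (∀ σ₁, (σ₁ ∈ C.polys ∧ (∀ i, IsFaceOf (τ i) σ₁) ∧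
        ∀ σ ∈ C.polys, (∀ i, IsFaceOf (τ i) σ) → IsFaceOf σ₁ σ) → σ₁ = σ₀) ∧
      (⋂ i, polyStar C (τ i)) = polyStar C σ₀ :=
  polyStar_inter_general hn C τ
end
end

section
/- d'-Poincaré lemma for open subsets of ℝ^r: Let V ⊂ ℝ^r be an open set that is star shaped with centre z (i.e., z + t(x − z) ∈ V for all x ∈ V, t ∈ [0,1]). Let α ∈ A^{p,q}(V) with p > 0 and d'α = 0. Then there exists β ∈ A^{p−1,q}(V) with d'β = α. -/
open Set

noncomputable section

/-- The data of a superform of bidegree `(p,q)` on `ℝ^r`: a pointwise evaluation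
on `p` tangent vectors (the `d'`-block) and `q` tangent vectors (the `d''`-block). -/
abbrev SFd (r p q : ℕ) : Type :=
  Vec r → (Fin p → Vec r) → (Fin q → Vec r) → ℝ

/-- `g` is multilinear and alternating in its `n` vector arguments. -/
def IsAltML {r n : ℕ} (g : (Fin n → Vec r) → ℝ) : Prop :=
  (∀ (v : Fin n → Vec r) (i : Fin n) (x y : Vec r),
      g (Function.update v i (x + y)) =
        g (Function.update v i x) + g (Function.update v i y)) ∧
  (∀ (v : Fin n → Vec r) (i : Fin n) (c : ℝ) (x : Vec r),
      g (Function.update v i (c • x)) = c * g (Function.update v i x)) ∧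
  (∀ (v : Fin n → Vec r) (i j : Fin n), i ≠ j → v i = v j → g v = 0)

/-- `α` is a smooth superform of bidegree `(p,q)` on the set `U ⊆ ℝ^r`. -/
def IsSuperformOn {r p q : ℕ} (U : Set (Vec r)) (α : SFd r p q) : Prop :=
  (∀ x ∈ U, ∀ w, IsAltML fun v => α x v w) ∧
  (∀ x ∈ U, ∀ v, IsAltML fun w => α x v w) ∧
  ∀ v w, ContDiffOn ℝ (⊤ : ℕ∞) (fun x => α x v w) U

/-- The differential `d'` of superforms, acting on the `d'`-block. -/
def dP {r p q : ℕ} (α : SFd r p q) : SFd r (p + 1) q := fun x v w =>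
  ∑ i : Fin (p + 1),
    (-1 : ℝ) ^ (i : ℕ) * fderiv ℝ (fun y => α y (v ∘ i.succAbove) w) x (v i)

/-- The differential `d''` of superforms, acting on the `d''`-block,
with the sign `(-1)^p`. -/
def dPP {r p q : ℕ} (α : SFd r p q) : SFd r p (q + 1) := fun x v w =>
  (-1 : ℝ) ^ p * ∑ j : Fin (q + 1),
    (-1 : ℝ) ^ (j : ℕ) * fderiv ℝ (fun y => α y v (w ∘ j.succAbove)) x (w j)

/-! The radial homotopy operator
`(Kα)(x)(v; w) = ∫₀¹ tᵖ α(z + t(x - z))(x - z, v; w) dt`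
inserts the radial vector `x - z` into the `d'`-block of `α` along the segment from `z` to `x`.
Differentiating under the integral sign, the terms of `d'(Kα)(x)(v; w)` in which the derivative
falls on the inserted vector add up, by alternation, to `(p + 1) tᵖ α(z + t(x - z))(v; w)`,
while `d'α = 0` turns the remaining ones into the radial derivative
`tᵖ⁺¹ ∂_{x - z} α(z + t(x - z))(v; w)`. Together they form `d/dt [tᵖ⁺¹ α(z + t(x - z))(v; w)]`,
whose integral over `[0, 1]` is `α(x)(v; w)`.
-/

open MeasureTheory Metric Topology

section PartialDerivative

variable {E F G : Type*} [NormedAddCommGroup E] [NormedSpace ℝ E] [NormedAddCommGroup F]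
  [NormedSpace ℝ F] [NormedAddCommGroup G] [NormedSpace ℝ G] {f : E × F → G}

lemma fderiv_partial_eq_comp_inl {x : E} {t : F} (hf : DifferentiableAt ℝ f (x, t)) :
    fderiv ℝ (fun y => f (y, t)) x = (fderiv ℝ f (x, t)).comp (.inl ℝ E F) :=
  (hf.hasFDerivAt.comp x (hasFDerivAt_prodMk_left x t)).fderiv

lemma continuousOn_fderiv_comp_inl {U : Set (E × F)} (hU : IsOpen U) (hf : ContDiffOn ℝ 1 f U) :
    ContinuousOn (fun q => (fderiv ℝ f q).comp (.inl ℝ E F)) U :=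
  ((ContinuousLinearMap.compL ℝ E (E × F) G).flip (.inl ℝ E F)).continuous.comp_continuousOn
    (hf.continuousOn_fderiv_of_isOpen hU le_rfl)

end PartialDerivative

section ParametricIntegral

-- `E` and `G` share a universe because the induction on the order of smoothness replaces `G`
-- by `E →L[ℝ] G`.
universe u

variable {E G : Type u} [NormedAddCommGroup E] [NormedAddCommGroup G] [NormedSpace ℝ G]
  {U : Set (E × ℝ)} {a b : ℝ} {x₀ : E}

lemma exists_closedBall_prod_uIcc_subset (hU : IsOpen U) (hx : ∀ t ∈ uIcc a b, (x₀, t) ∈ U) :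
    ∃ ε > 0, closedBall x₀ ε ×ˢ uIcc a b ⊆ U := by
  obtain ⟨u, v, hu, -, hxu, hIv, huv⟩ := generalized_tube_lemma isCompact_singleton isCompact_uIcc
    hU (by rintro ⟨x, t⟩ ⟨rfl, ht⟩; exact hx t ht)
  obtain ⟨ε, hε, hball⟩ := Metric.isOpen_iff.mp hu x₀ (hxu rfl)
  exact ⟨ε / 2, by positivity, fun q hq =>
    huv ⟨hball (closedBall_subset_ball (by linarith) hq.1), hIv hq.2⟩⟩

lemma eventually_forall_uIcc_mem (hU : IsOpen U) (hx : ∀ t ∈ uIcc a b, (x₀, t) ∈ U) :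
    ∀ᶠ x in 𝓝 x₀, ∀ t ∈ uIcc a b, (x, t) ∈ U := by
  obtain ⟨ε, hε, hKU⟩ := exists_closedBall_prod_uIcc_subset hU hx
  filter_upwards [closedBall_mem_nhds x₀ hε] with x hxε t ht using hKU ⟨hxε, ht⟩

variable [ProperSpace E]

lemma exists_bound_closedBall_prod_uIcc {F : Type*} [NormedAddCommGroup F] {g : E × ℝ → F}
    (hU : IsOpen U) (hg : ContinuousOn g U) (hx : ∀ t ∈ uIcc a b, (x₀, t) ∈ U) :
    ∃ ε > 0, ∃ C, ∀ x ∈ closedBall x₀ ε, ∀ t ∈ uIcc a b, (x, t) ∈ U ∧ ‖g (x, t)‖ ≤ C := by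
  obtain ⟨ε, hε, hKU⟩ := exists_closedBall_prod_uIcc_subset hU hx
  obtain ⟨C, hC⟩ := ((isCompact_closedBall x₀ ε).prod isCompact_uIcc).exists_bound_of_continuousOn
    (hg.mono hKU)
  exact ⟨ε, hε, C, fun x hx t ht => ⟨hKU ⟨hx, ht⟩, hC _ ⟨hx, ht⟩⟩⟩

lemma continuousAt_intervalIntegral_of_continuousOn {f : E × ℝ → G} (hU : IsOpen U)
    (hf : ContinuousOn f U) (hx : ∀ t ∈ uIcc a b, (x₀, t) ∈ U) :
    ContinuousAt (fun x => ∫ t in a..b, f (x, t)) x₀ := by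
  obtain ⟨ε, hε, C, hC⟩ := exists_bound_closedBall_prod_uIcc hU hf hx
  apply intervalIntegral.continuousAt_of_dominated_interval (bound := fun _ => C)
  · filter_upwards [closedBall_mem_nhds x₀ hε] with x hxε
    refine ContinuousOn.aestronglyMeasurable ?_ measurableSet_uIoc
    exact hf.comp (by fun_prop) fun t ht => (hC x hxε t (uIoc_subset_uIcc ht)).1
  · filter_upwards [closedBall_mem_nhds x₀ hε] with x hxε
    exact ae_of_all _ fun t ht => (hC x hxε t (uIoc_subset_uIcc ht)).2
  · exact intervalIntegrable_const
  · refine ae_of_all _ fun t ht => ContinuousOn.continuousAt ?_ (closedBall_mem_nhds x₀ hε)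
    exact hf.comp (by fun_prop) fun x hxε => (hC x hxε t (uIoc_subset_uIcc ht)).1

variable [NormedSpace ℝ E]

lemma hasFDerivAt_intervalIntegral_of_contDiffOn {f : E × ℝ → G} (hU : IsOpen U)
    (hf : ContDiffOn ℝ 1 f U) (hx : ∀ t ∈ uIcc a b, (x₀, t) ∈ U) :
    HasFDerivAt (fun x => ∫ t in a..b, f (x, t))
      (∫ t in a..b, (fderiv ℝ f (x₀, t)).comp (.inl ℝ E ℝ)) x₀ := by
  have hf' := continuousOn_fderiv_comp_inl hU hf
  obtain ⟨ε, hε, C, hC⟩ := exists_bound_closedBall_prod_uIcc hU hf' hx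
  have hx₀ : x₀ ∈ closedBall x₀ ε := mem_closedBall_self hε.le
  apply intervalIntegral.hasFDerivAt_integral_of_dominated_of_fderiv_le (bound := fun _ => C)
    (ball_mem_nhds x₀ hε)
  · filter_upwards [closedBall_mem_nhds x₀ hε] with x hxε
    refine ContinuousOn.aestronglyMeasurable ?_ measurableSet_uIoc
    exact hf.continuousOn.comp (by fun_prop) fun t ht => (hC x hxε t (uIoc_subset_uIcc ht)).1
  · refine ContinuousOn.intervalIntegrable ?_
    exact hf.continuousOn.comp (by fun_prop) fun t ht => (hC x₀ hx₀ t ht).1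
  · refine ContinuousOn.aestronglyMeasurable ?_ measurableSet_uIoc
    exact hf'.comp (by fun_prop) fun t ht => (hC x₀ hx₀ t (uIoc_subset_uIcc ht)).1
  · exact ae_of_all _ fun t ht x hxε =>
      (hC x (ball_subset_closedBall hxε) t (uIoc_subset_uIcc ht)).2
  · exact intervalIntegrable_const
  · refine ae_of_all _ fun t ht x hxε => ?_
    have hmem := (hC x (ball_subset_closedBall hxε) t (uIoc_subset_uIcc ht)).1
    exact ((hf.differentiableOn one_ne_zero).differentiableAt
      (hU.mem_nhds hmem)).hasFDerivAt.comp x (hasFDerivAt_prodMk_left x t)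

lemma fderiv_intervalIntegral_apply {f : E × ℝ → G} (hU : IsOpen U) (hf : ContDiffOn ℝ 1 f U)
    (hx : ∀ t ∈ uIcc a b, (x₀, t) ∈ U) (u : E) :
    fderiv ℝ (fun x => ∫ t in a..b, f (x, t)) x₀ u =
      ∫ t in a..b, fderiv ℝ (fun y => f (y, t)) x₀ u := by
  have hint : IntervalIntegrable (fun t => (fderiv ℝ f (x₀, t)).comp (.inl ℝ E ℝ)) volume a b :=
    ((continuousOn_fderiv_comp_inl hU hf).comp (by fun_prop) hx).intervalIntegrable
  rw [(hasFDerivAt_intervalIntegral_of_contDiffOn hU hf hx).fderiv,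
    ContinuousLinearMap.intervalIntegral_apply hint]
  refine intervalIntegral.integral_congr fun t ht => ?_
  rw [fderiv_partial_eq_comp_inl
    ((hf.differentiableOn one_ne_zero).differentiableAt (hU.mem_nhds (hx t ht)))]

lemma contDiffAt_intervalIntegral_of_contDiffOn (n : ℕ) {f : E × ℝ → G} (hU : IsOpen U)
    (hf : ContDiffOn ℝ n f U) (hx : ∀ t ∈ uIcc a b, (x₀, t) ∈ U) :
    ContDiffAt ℝ n (fun x => ∫ t in a..b, f (x, t)) x₀ := by
  induction n generalizing G f with
  | zero =>
    obtain ⟨u, hu, hmem⟩ := (eventually_forall_uIcc_mem hU hx).exists_mem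
    exact contDiffAt_zero.mpr ⟨u, hu, fun x hxu =>
      (continuousAt_intervalIntegral_of_continuousOn hU hf.continuousOn
        (hmem x hxu)).continuousWithinAt⟩
  | succ n ih =>
    have hf1 : ContDiffOn ℝ 1 f U := hf.of_le (by exact_mod_cast Nat.le_add_left 1 n)
    have hf' : ContDiffOn ℝ n (fun q => (fderiv ℝ f q).comp (.inl ℝ E ℝ)) U :=
      (hf.fderiv_of_isOpen hU (by push_cast; rfl)).clm_comp contDiffOn_const
    rw [Nat.cast_succ, contDiffAt_succ_iff_hasFDerivAt]
    obtain ⟨u, hu, hmem⟩ := (eventually_forall_uIcc_mem hU hx).exists_mem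
    exact ⟨_, ⟨u, hu, fun x hxu =>
      hasFDerivAt_intervalIntegral_of_contDiffOn hU hf1 (hmem x hxu)⟩, ih hf'⟩

lemma contDiffOn_intervalIntegral_of_contDiffOn {f : E × ℝ → G} (hU : IsOpen U)
    (hf : ContDiffOn ℝ (⊤ : ℕ∞) f U) :
    ContDiffOn ℝ (⊤ : ℕ∞) (fun x => ∫ t in a..b, f (x, t)) {x | ∀ t ∈ uIcc a b, (x, t) ∈ U} :=
  fun x hx => contDiffWithinAt_infty.mpr fun n =>
    (contDiffAt_intervalIntegral_of_contDiffOn n hU (hf.of_le (by exact_mod_cast le_top))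
      hx).contDiffWithinAt

end ParametricIntegral

namespace IsAltML

variable {r n : ℕ}

def toAlternatingMap {g : (Fin n → Vec r) → ℝ} (hg : IsAltML g) :
    AlternatingMap ℝ (Vec r) ℝ (Fin n) where
  toFun := g
  map_update_add' A i x y := by convert hg.1 A i x y
  map_update_smul' A i c x := by rw [smul_eq_mul]; convert hg.2.1 A i c x
  map_eq_zero_of_eq' A i j hA hij := hg.2.2 A i j hij hA

lemma const_mul {g : (Fin n → Vec r) → ℝ} (hg : IsAltML g) (c : ℝ) :
    IsAltML fun v => c * g v :=
  ⟨fun v i x y => by simp only [hg.1, mul_add], fun v i a x => by simp only [hg.2.1, mul_left_comm],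
    fun v i j hij hv => by simp only [hg.2.2 v i j hij hv, mul_zero]⟩

lemma comp_cons {g : (Fin (n + 1) → Vec r) → ℝ} (hg : IsAltML g) (u : Vec r) :
    IsAltML fun v : Fin n → Vec r => g (Fin.cons u v) :=
  ⟨fun v i x y => by simp only [Fin.cons_update, hg.1],
    fun v i c x => by simp only [Fin.cons_update, hg.2.1],
    fun v i j hij hv => hg.2.2 _ i.succ j.succ (by simpa using hij) (by simpa using hv)⟩

lemma isLinearMap_cons {g : (Fin (n + 1) → Vec r) → ℝ} (hg : IsAltML g) (v : Fin n → Vec r) :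
    IsLinearMap ℝ fun u : Vec r => g (Fin.cons u v) := by
  have hupd (u : Vec r) : (Fin.cons u v : Fin (n + 1) → Vec r) =
      Function.update (Fin.cons 0 v) 0 u := by rw [Fin.update_cons_zero]
  exact ⟨fun x y => by rw [hupd, hupd x, hupd y, hg.1],
    fun c x => by rw [hupd, hupd x, hg.2.1, smul_eq_mul]⟩

lemma cons_apply_succAbove {g : (Fin (n + 1) → Vec r) → ℝ} (hg : IsAltML g)
    (v : Fin (n + 1) → Vec r) (i : Fin (n + 1)) :
    g (Fin.cons (v i) (v ∘ i.succAbove)) = (-1) ^ (i : ℕ) * g v := by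
  have hperm : (Fin.cons (v i) (v ∘ i.succAbove) : Fin (n + 1) → Vec r) =
      v ∘ ⇑(i.cycleRange⁻¹) := by
    funext j
    induction j using Fin.cases with
    | zero => simp [Fin.cycleRange_symm_zero]
    | succ j => simp [Fin.cycleRange_symm_succ]
  have hsign : Equiv.Perm.sign i.cycleRange⁻¹ = (-1) ^ (i : ℕ) := by
    rw [map_inv, Fin.sign_cycleRange, Int.units_inv_eq_self]
  rw [hperm]
  change hg.toAlternatingMap _ = _
  rw [AlternatingMap.map_perm, hsign, Units.smul_def]
  push_cast
  simp
  rfl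

lemma of_intervalIntegral {F : ℝ → (Fin n → Vec r) → ℝ} {a b : ℝ}
    (hF : ∀ t ∈ uIcc a b, IsAltML (F t))
    (hint : ∀ v, IntervalIntegrable (fun t => F t v) volume a b) :
    IsAltML fun v => ∫ t in a..b, F t v := by
  refine ⟨fun v i x y => ?_, fun v i c x => ?_, fun v i j hij hv => ?_⟩
  · rw [← intervalIntegral.integral_add (hint _) (hint _)]
    exact intervalIntegral.integral_congr fun t ht => (hF t ht).1 v i x y
  · rw [← intervalIntegral.integral_const_mul]
    exact intervalIntegral.integral_congr fun t ht => (hF t ht).2.1 v i c x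
  · rw [← intervalIntegral.integral_zero]
    exact intervalIntegral.integral_congr fun t ht => (hF t ht).2.2 v i j hij hv

end IsAltML

lemma IsLinearMap.apply_eq_sum {r : ℕ} {f : Vec r → ℝ} (hf : IsLinearMap ℝ f) (u : Vec r) :
    f u = ∑ k, u k * f (Pi.single k 1) := by
  have := (IsLinearMap.mk' f hf).pi_apply_eq_sum_univ u
  refine this.trans (Finset.sum_congr rfl fun k _ => ?_)
  rw [smul_eq_mul, IsLinearMap.mk'_apply]
  congr 2 with j
  simp [Pi.single_apply, eq_comm]

section LinearInSecondArgument

variable {r : ℕ} {V : Set (Vec r)} {g : Vec r → Vec r → ℝ}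

lemma contDiffOn_uncurry_of_isLinearMap {n : WithTop ℕ∞} (hlin : ∀ y ∈ V, IsLinearMap ℝ (g y))
    (hg : ∀ u, ContDiffOn ℝ n (g · u) V) :
    ContDiffOn ℝ n (fun q : Vec r × Vec r => g q.1 q.2) (V ×ˢ univ) := by
  refine ContDiffOn.congr (f := fun q => ∑ k, q.2 k * g q.1 (Pi.single k 1)) ?_
    fun q hq => (hlin q.1 hq.1).apply_eq_sum q.2
  refine ContDiffOn.sum fun k _ => ?_
  exact ((contDiff_apply ℝ ℝ k).comp contDiff_snd).contDiffOn.mul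
    ((hg _).comp contDiffOn_fst fun q hq => hq.1)

lemma fderiv_uncurry_apply_of_isLinearMap (hV : IsOpen V) (hlin : ∀ y ∈ V, IsLinearMap ℝ (g y))
    (hg : ∀ u, ContDiffOn ℝ 1 (g · u) V) {y : Vec r} (hy : y ∈ V) (u a b : Vec r) :
    fderiv ℝ (fun q : Vec r × Vec r => g q.1 q.2) (y, u) (a, b) =
      fderiv ℝ (g · u) y a + g y b := by
  have hd : DifferentiableAt ℝ (fun q : Vec r × Vec r => g q.1 q.2) (y, u) :=
    ((contDiffOn_uncurry_of_isLinearMap hlin hg).differentiableOn one_ne_zero).differentiableAt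
      ((hV.prod isOpen_univ).mem_nhds ⟨hy, mem_univ u⟩)
  have hfst : fderiv ℝ (fun q : Vec r × Vec r => g q.1 q.2) (y, u) (a, 0) =
      fderiv ℝ (g · u) y a := by
    exact congrArg (· a)
      (hd.hasFDerivAt.comp y (hasFDerivAt_prodMk_left (𝕜 := ℝ) y u)).fderiv.symm
  have hsnd : fderiv ℝ (fun q : Vec r × Vec r => g q.1 q.2) (y, u) (0, b) = g y b := by
    let L : Vec r →L[ℝ] ℝ := (IsLinearMap.mk' (g y) (hlin y hy)).toContinuousLinearMap
    exact congrArg (· b) ((hd.hasFDerivAt.comp u (hasFDerivAt_prodMk_right (𝕜 := ℝ) y u)).unique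
      L.hasFDerivAt)
  rw [← hfst, ← hsnd, ← map_add, Prod.mk_add_mk, add_zero, zero_add]

end LinearInSecondArgument

lemma dP_cons {r p q : ℕ} (α : SFd r (p + 1) q) (y u : Vec r) (v : Fin (p + 1) → Vec r)
    (w : Fin q → Vec r) :
    dP α y (Fin.cons u v) w = fderiv ℝ (fun y => α y v w) y u -
      ∑ i : Fin (p + 1), (-1) ^ (i : ℕ) *
        fderiv ℝ (fun y => α y (Fin.cons u (v ∘ i.succAbove)) w) y (v i) := by
  rw [dP, Fin.sum_univ_succ, sub_eq_add_neg, ← Finset.sum_neg_distrib]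
  congr 1
  · simp [Fin.succAbove_zero]
  · refine Finset.sum_congr rfl fun i _ => ?_
    rw [Fin.cons_comp_succ_succAbove, Fin.cons_succ, Fin.val_succ, pow_succ]
    simp
    rfl

lemma IsAltML.sum_cons_apply_succAbove {r n : ℕ} {g : (Fin (n + 1) → Vec r) → ℝ}
    (hg : IsAltML g) (v : Fin (n + 1) → Vec r) :
    ∑ i : Fin (n + 1), (-1) ^ (i : ℕ) * g (Fin.cons (v i) (v ∘ i.succAbove)) = (n + 1) * g v := by
  simp only [hg.cons_apply_succAbove, ← mul_assoc, ← mul_pow, neg_one_mul, neg_neg, one_pow,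
    one_mul, Finset.sum_const, Finset.card_univ, Fintype.card_fin, nsmul_eq_mul]
  push_cast
  ring

section RadialHomotopy

variable {r p q : ℕ}

def radialIntegrand (z : Vec r) (α : SFd r (p + 1) q) (v : Fin p → Vec r) (w : Fin q → Vec r) :
    Vec r × ℝ → ℝ := fun xt => xt.2 ^ p * α (z + xt.2 • (xt.1 - z)) (Fin.cons (xt.1 - z) v) w

def radialHomotopy (z : Vec r) (α : SFd r (p + 1) q) : SFd r p q := fun x v w =>
  ∫ t in (0 : ℝ)..1, radialIntegrand z α v w (x, t)

variable {V : Set (Vec r)} {z x : Vec r}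

lemma intervalIntegrable_pow_mul_comp_segment {φ : Vec r → ℝ} (hφ : ContinuousOn φ V)
    (hstar : ∀ x ∈ V, ∀ t ∈ uIcc (0 : ℝ) 1, z + t • (x - z) ∈ V) (hx : x ∈ V) (m : ℕ) :
    IntervalIntegrable (fun t : ℝ => t ^ m * φ (z + t • (x - z))) volume 0 1 :=
  ((continuous_pow m).continuousOn.mul (hφ.comp (by fun_prop) (hstar x hx))).intervalIntegrable

lemma contDiffOn_radialIntegrand {α : SFd r (p + 1) q} (hα : IsSuperformOn V α)
    (v : Fin p → Vec r) (w : Fin q → Vec r) :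
    ContDiffOn ℝ (⊤ : ℕ∞) (radialIntegrand z α v w) {xt | z + xt.2 • (xt.1 - z) ∈ V} := by
  have hjoint := contDiffOn_uncurry_of_isLinearMap (g := fun y u => α y (Fin.cons u v) w)
    (fun y hy => (hα.1 y hy w).isLinearMap_cons v) (fun u => hα.2.2 _ w)
  exact (contDiff_snd.pow p).contDiffOn.mul
    (hjoint.comp (f := fun xt : Vec r × ℝ => (z + xt.2 • (xt.1 - z), xt.1 - z))
      (by fun_prop) fun _ hxt => ⟨hxt, mem_univ _⟩)

lemma isSuperformOn_radialHomotopy (hV : IsOpen V)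
    (hstar : ∀ x ∈ V, ∀ t ∈ uIcc (0 : ℝ) 1, z + t • (x - z) ∈ V) {α : SFd r (p + 1) q}
    (hα : IsSuperformOn V α) : IsSuperformOn V (radialHomotopy z α) := by
  have hint : ∀ x ∈ V, ∀ A w, IntervalIntegrable
      (fun t : ℝ => t ^ p * α (z + t • (x - z)) A w) volume 0 1 :=
    fun x hx A w => intervalIntegrable_pow_mul_comp_segment (hα.2.2 A w).continuousOn hstar hx p
  refine ⟨fun x hx w => ?_, fun x hx v => ?_, fun v w => ?_⟩
  · exact IsAltML.of_intervalIntegral (fun t ht =>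
      ((hα.1 _ (hstar x hx t ht) w).comp_cons (x - z)).const_mul _)
      fun v => hint x hx (Fin.cons (x - z) v) w
  · exact IsAltML.of_intervalIntegral (fun t ht =>
      (hα.2.1 _ (hstar x hx t ht) _).const_mul _) fun w => hint x hx (Fin.cons (x - z) v) w
  · exact (contDiffOn_intervalIntegral_of_contDiffOn (hV.preimage (by fun_prop))
      (contDiffOn_radialIntegrand hα v w)).mono hstar

lemma fderiv_radialIntegrand_apply (hV : IsOpen V) {α : SFd r (p + 1) q}
    (hα : IsSuperformOn V α) {t : ℝ} (hxt : z + t • (x - z) ∈ V) (v : Fin p → Vec r)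
    (w : Fin q → Vec r) (u : Vec r) :
    fderiv ℝ (fun y => radialIntegrand z α v w (y, t)) x u =
      t ^ p * α (z + t • (x - z)) (Fin.cons u v) w +
        t ^ (p + 1) * fderiv ℝ (fun y => α y (Fin.cons (x - z) v) w) (z + t • (x - z)) u := by
  have hlin : ∀ y ∈ V, IsLinearMap ℝ fun u => α y (Fin.cons u v) w :=
    fun y hy => (hα.1 y hy w).isLinearMap_cons v
  have hsmooth : ∀ u, ContDiffOn ℝ 1 (fun y => α y (Fin.cons u v) w) V :=
    fun u => (hα.2.2 _ w).of_le (by exact_mod_cast le_top)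
  have hΦ : DifferentiableAt ℝ (fun q : Vec r × Vec r => α q.1 (Fin.cons q.2 v) w)
      (z + t • (x - z), x - z) :=
    ((contDiffOn_uncurry_of_isLinearMap hlin hsmooth).differentiableOn one_ne_zero).differentiableAt
      ((hV.prod isOpen_univ).mem_nhds ⟨hxt, mem_univ _⟩)
  have hline : HasFDerivAt (fun y : Vec r => (z + t • (y - z), y - z))
      ((t • ContinuousLinearMap.id ℝ (Vec r)).prod (ContinuousLinearMap.id ℝ (Vec r))) x :=
    ((((hasFDerivAt_id x).sub_const z).const_smul t).const_add z).prodMk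
      ((hasFDerivAt_id x).sub_const z)
  have hcomp : HasFDerivAt (fun y => radialIntegrand z α v w (y, t)) _ x :=
    (hΦ.hasFDerivAt.comp x hline).const_mul (t ^ p)
  rw [hcomp.fderiv]
  simp only [FunLike.coe_smul, Pi.smul_apply, ContinuousLinearMap.comp_apply,
    ContinuousLinearMap.prod_apply, ContinuousLinearMap.id_apply, smul_eq_mul]
  rw [fderiv_uncurry_apply_of_isLinearMap hV hlin hsmooth hxt, map_smul, smul_eq_mul]
  ring

lemma fderiv_radialHomotopy_apply (hV : IsOpen V)
    (hstar : ∀ x ∈ V, ∀ t ∈ uIcc (0 : ℝ) 1, z + t • (x - z) ∈ V) {α : SFd r (p + 1) q}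
    (hα : IsSuperformOn V α) (hx : x ∈ V) (v : Fin p → Vec r) (w : Fin q → Vec r) (u : Vec r) :
    fderiv ℝ (fun y => radialHomotopy z α y v w) x u =
      ∫ t in (0 : ℝ)..1, (t ^ p * α (z + t • (x - z)) (Fin.cons u v) w +
        t ^ (p + 1) * fderiv ℝ (fun y => α y (Fin.cons (x - z) v) w) (z + t • (x - z)) u) :=
  (fderiv_intervalIntegral_apply (hV.preimage (by fun_prop))
    ((contDiffOn_radialIntegrand hα v w).of_le (by exact_mod_cast le_top)) (hstar x hx) u).trans
    (intervalIntegral.integral_congr fun t ht =>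
      fderiv_radialIntegrand_apply hV hα (hstar x hx t ht) v w u)

lemma integral_deriv_pow_mul_comp_segment (hV : IsOpen V)
    (hstar : ∀ x ∈ V, ∀ t ∈ uIcc (0 : ℝ) 1, z + t • (x - z) ∈ V) {φ : Vec r → ℝ}
    (hφ : ContDiffOn ℝ 1 φ V) (hx : x ∈ V) (n : ℕ) :
    ∫ t in (0 : ℝ)..1, ((n + 1) * (t ^ n * φ (z + t • (x - z))) +
      t ^ (n + 1) * fderiv ℝ φ (z + t • (x - z)) (x - z)) = φ x := by
  have hderiv : ∀ t ∈ uIcc (0 : ℝ) 1, HasDerivAt (fun s => s ^ (n + 1) * φ (z + s • (x - z)))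
      ((n + 1) * (t ^ n * φ (z + t • (x - z))) +
        t ^ (n + 1) * fderiv ℝ φ (z + t • (x - z)) (x - z)) t := by
    intro t ht
    have hφt := ((hφ.differentiableOn one_ne_zero).differentiableAt
      (hV.mem_nhds (hstar x hx t ht))).hasFDerivAt
    have hseg : HasDerivAt (fun s : ℝ => z + s • (x - z)) (x - z) t := by
      simpa using ((hasDerivAt_id t).smul_const (x - z)).const_add z
    exact ((hasDerivAt_pow (n + 1) t).fun_mul (hφt.comp_hasDerivAt t hseg)).congr_deriv
      (by simp only [Function.comp_apply]; push_cast; ring)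
  have hint := ((intervalIntegrable_pow_mul_comp_segment hφ.continuousOn hstar hx n).const_mul
    ((n : ℝ) + 1)).add (intervalIntegrable_pow_mul_comp_segment
      ((hφ.continuousOn_fderiv_of_isOpen hV le_rfl).clm_apply (continuousOn_const (c := x - z)))
      hstar hx (n + 1))
  rw [intervalIntegral.integral_eq_sub_of_hasDerivAt hderiv hint]
  simp

lemma dP_radialHomotopy (hV : IsOpen V)
    (hstar : ∀ x ∈ V, ∀ t ∈ uIcc (0 : ℝ) 1, z + t • (x - z) ∈ V) {α : SFd r (p + 1) q}
    (hα : IsSuperformOn V α) (hclosed : ∀ x ∈ V, ∀ v w, dP α x v w = 0) (hx : x ∈ V)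
    (v : Fin (p + 1) → Vec r) (w : Fin q → Vec r) :
    dP (radialHomotopy z α) x v w = α x v w := by
  set γ : ℝ → Vec r := fun t => z + t • (x - z)
  have hint : ∀ i : Fin (p + 1), IntervalIntegrable (fun t => (-1) ^ (i : ℕ) *
      (t ^ p * α (γ t) (Fin.cons (v i) (v ∘ i.succAbove)) w + t ^ (p + 1) *
        fderiv ℝ (fun y => α y (Fin.cons (x - z) (v ∘ i.succAbove)) w) (γ t) (v i)))
      volume 0 1 := fun i =>
    ((intervalIntegrable_pow_mul_comp_segment (hα.2.2 _ w).continuousOn hstar hx p).add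
      (intervalIntegrable_pow_mul_comp_segment (((hα.2.2 _ w).continuousOn_fderiv_of_isOpen hV
        (by exact_mod_cast le_top)).clm_apply continuousOn_const) hstar hx (p + 1))).const_mul _
  have hpointwise : ∀ t ∈ uIcc (0 : ℝ) 1, ∑ i : Fin (p + 1), (-1) ^ (i : ℕ) *
      (t ^ p * α (γ t) (Fin.cons (v i) (v ∘ i.succAbove)) w + t ^ (p + 1) *
        fderiv ℝ (fun y => α y (Fin.cons (x - z) (v ∘ i.succAbove)) w) (γ t) (v i)) =
      (p + 1) * (t ^ p * α (γ t) v w) +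
        t ^ (p + 1) * fderiv ℝ (fun y => α y v w) (γ t) (x - z) := by
    intro t ht
    have hsign := (hα.1 (γ t) (hstar x hx t ht) w).sum_cons_apply_succAbove v
    have hcl := dP_cons α (γ t) (x - z) v w
    rw [hclosed _ (hstar x hx t ht)] at hcl
    simp only [mul_add, Finset.sum_add_distrib, mul_left_comm _ (t ^ p),
      mul_left_comm _ (t ^ (p + 1)), ← Finset.mul_sum, hsign]
    linear_combination t ^ (p + 1) * hcl
  calc dP (radialHomotopy z α) x v w
      = ∑ i : Fin (p + 1), ∫ t in (0 : ℝ)..1, (-1) ^ (i : ℕ) *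
          (t ^ p * α (γ t) (Fin.cons (v i) (v ∘ i.succAbove)) w + t ^ (p + 1) *
            fderiv ℝ (fun y => α y (Fin.cons (x - z) (v ∘ i.succAbove)) w) (γ t) (v i)) := by
        refine Finset.sum_congr rfl fun i _ => ?_
        rw [fderiv_radialHomotopy_apply hV hstar hα hx, intervalIntegral.integral_const_mul]
    _ = ∫ t in (0 : ℝ)..1, ((p + 1) * (t ^ p * α (γ t) v w) +
          t ^ (p + 1) * fderiv ℝ (fun y => α y v w) (γ t) (x - z)) := by
        rw [← intervalIntegral.integral_finsetSum fun i _ => hint i]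
        exact intervalIntegral.integral_congr hpointwise
    _ = α x v w := by
        exact_mod_cast integral_deriv_pow_mul_comp_segment hV hstar
          ((hα.2.2 v w).of_le (by exact_mod_cast le_top)) hx p

end RadialHomotopy

/-- d'-Poincaré lemma for open subsets of `ℝ^r`: on an open set
`V ⊆ ℝ^r` star shaped with centre `z`, every `d'`-closed superform of bidegree
`(p,q)` with `p > 0` is `d'`-exact. -/
theorem dP_poincare_lemma {r p q : ℕ} (V : Set (Vec r)) (hV : IsOpen V)
    (z : Vec r) (hstar : ∀ x ∈ V, ∀ t ∈ Icc (0 : ℝ) 1, z + t • (x - z) ∈ V)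
    (α : SFd r (p + 1) q) (hα : IsSuperformOn V α)
    (hclosed : ∀ x ∈ V, ∀ v w, dP α x v w = 0) :
    ∃ β : SFd r p q, IsSuperformOn V β ∧
      ∀ x ∈ V, ∀ v w, dP β x v w = α x v w := by
  have hseg : ∀ x ∈ V, ∀ t ∈ uIcc (0 : ℝ) 1, z + t • (x - z) ∈ V := by
    rwa [uIcc_of_le zero_le_one]
  exact ⟨radialHomotopy z α, isSuperformOn_radialHomotopy hV hseg hα,
    fun x hx v w => dP_radialHomotopy hV hseg hα hclosed hx v w⟩
end
end

section
/- Abstract good cover vanishing lemma: Let (A^•, D) be a complex of sheaves of real vector spaces on a topological space X satisfying the Mayer–Vietoris short exact sequence property for any two open sets. Suppose Ω ⊂ X has a good cover by m open sets Ω₁, …, Ω_m, meaning every nonempty finite intersection of the Ω_i has vanishing cohomology H^k for all k > 0. Then H^k(A^•(Ω), D) = 0 for all k ≥ m. -/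
open Set

noncomputable section

/-- Finite dimensionality of the `k`-th cohomology of a complex
`D : M k →ₗ M (k+1)` of real vector spaces (with `H⁰ = ker D₀`). -/
def CohFinDim (M : ℕ → Type) [∀ k, AddCommGroup (M k)] [∀ k, Module ℝ (M k)]
    (D : ∀ k, M k →ₗ[ℝ] M (k + 1)) : ℕ → Prop
  | 0 => FiniteDimensional ℝ (LinearMap.ker (D 0))
  | k + 1 =>
      FiniteDimensional ℝ
        (LinearMap.ker (D (k + 1)) ⧸
          (LinearMap.range (D k)).comap (LinearMap.ker (D (k + 1))).subtype)

/-- Vanishing of the `k`-th cohomology of a complex of real vector spaces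
(with `H⁰ = ker D₀`). -/
def CohZero (M : ℕ → Type) [∀ k, AddCommGroup (M k)] [∀ k, Module ℝ (M k)]
    (D : ∀ k, M k →ₗ[ℝ] M (k + 1)) : ℕ → Prop
  | 0 => ∀ a : M 0, D 0 a = 0 → a = 0
  | k + 1 => ∀ a : M (k + 1), D (k + 1) a = 0 → ∃ b : M k, D k b = a

variable {X : Type} [TopologicalSpace X]

/-- The Mayer–Vietoris property for a "complex of sheaves" given by sections
`A`, restrictions `res` and differentials `D`: for open `U₁, U₂` the sequence
`0 → A^•(U₁ ∪ U₂) → A^•(U₁) ⊕ A^•(U₂) → A^•(U₁ ∩ U₂) → 0`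
(restriction, then difference of restrictions) is exact in each degree. -/
def MayerVietoris (A : Set X → ℕ → Type)
    [∀ U k, AddCommGroup (A U k)] [∀ U k, Module ℝ (A U k)]
    (res : ∀ (U V : Set X), U ⊆ V → ∀ k, A V k →ₗ[ℝ] A U k) : Prop :=
  ∀ U₁ U₂ : Set X, IsOpen U₁ → IsOpen U₂ → ∀ k : ℕ,
    (Function.Injective fun a : A (U₁ ∪ U₂) k =>
      (res U₁ (U₁ ∪ U₂) subset_union_left k a,
       res U₂ (U₁ ∪ U₂) subset_union_right k a)) ∧
    (∀ (b₁ : A U₁ k) (b₂ : A U₂ k),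
      res (U₁ ∩ U₂) U₁ inter_subset_left k b₁ =
        res (U₁ ∩ U₂) U₂ inter_subset_right k b₂ ↔
      ∃ a : A (U₁ ∪ U₂) k,
        res U₁ (U₁ ∪ U₂) subset_union_left k a = b₁ ∧
        res U₂ (U₁ ∪ U₂) subset_union_right k a = b₂) ∧
    (∀ c : A (U₁ ∩ U₂) k, ∃ (b₁ : A U₁ k) (b₂ : A U₂ k),
      res (U₁ ∩ U₂) U₁ inter_subset_left k b₁ -
        res (U₁ ∩ U₂) U₂ inter_subset_right k b₂ = c)

theorem good_cover_vanishing_aux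
    (A : Set X → ℕ → Type)
    [∀ U k, AddCommGroup (A U k)] [∀ U k, Module ℝ (A U k)]
    (res : ∀ (U V : Set X), U ⊆ V → ∀ k, A V k →ₗ[ℝ] A U k)
    (D : ∀ (U : Set X) (k : ℕ), A U k →ₗ[ℝ] A U (k + 1))
    (hDD : ∀ (U : Set X) (k : ℕ) (a : A U k), D U (k + 1) (D U k a) = 0)
    (hcomm : ∀ (U V : Set X) (h : U ⊆ V) (k : ℕ) (a : A V k),
      D U k (res U V h k a) = res U V h (k + 1) (D V k a))
    (hMV : MayerVietoris A res) :
    ∀ m : ℕ, ∀ Ωi : Fin (m + 1) → Set X, (∀ i, IsOpen (Ωi i)) →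
    (∀ s : Finset (Fin (m + 1)), s.Nonempty → ∀ k : ℕ, 0 < k →
      CohZero (A (⋂ i ∈ s, Ωi i)) (D (⋂ i ∈ s, Ωi i)) k) →
    ∀ k : ℕ, m + 1 ≤ k → CohZero (A (⋃ i, Ωi i)) (D (⋃ i, Ωi i)) k := by
  intro m
  induction m with
  | zero =>
    intro Ωi _ hgood k hk
    have hset : (⋃ i, Ωi i) = ⋂ i ∈ ({0} : Finset (Fin 1)), Ωi i := by
      ext x
      simp [mem_iUnion, Fin.exists_fin_one]
    rw [hset]
    exact hgood {0} ⟨0, by simp⟩ k (by omega)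
  | succ m IH =>
    intro Ωi hopen hgood k hk
    set V : Set X := Ωi (Fin.last (m + 1)) with hVdef
    set W : Fin (m + 1) → Set X := fun i => Ωi i.castSucc with hWdef
    set U : Set X := ⋃ i, W i with hUdef
    have hUo : IsOpen U := isOpen_iUnion fun i => hopen _
    have hVo : IsOpen V := hopen _
    have hUV : (⋃ i, Ωi i) = U ∪ V := by
      ext x
      simp only [hUdef, hWdef, hVdef, mem_iUnion, mem_union]
      constructor
      · rintro ⟨i, hi⟩
        rcases Fin.lastCases (motive := fun i => x ∈ Ωi i →
            (∃ j : Fin (m + 1), x ∈ Ωi j.castSucc) ∨ x ∈ Ωi (Fin.last (m + 1)))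
          (fun h => Or.inr h) (fun j h => Or.inl ⟨j, h⟩) i hi with h
        · exact h
      · rintro (⟨j, hj⟩ | h)
        · exact ⟨j.castSucc, hj⟩
        · exact ⟨Fin.last (m + 1), h⟩
    rw [hUV]
    -- cohomology vanishing facts
    have hU : ∀ k : ℕ, m + 1 ≤ k → CohZero (A U) (D U) k := by
      refine IH W (fun i => hopen _) ?_
      intro s hs k hk
      have h1 : (⋂ i ∈ s, W i) = ⋂ j ∈ s.map Fin.castSuccEmb, Ωi j := by
        ext x; simp [hWdef, Fin.castSuccEmb]; exact Iff.rfl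
      rw [h1]
      exact hgood _ (hs.map (f := Fin.castSuccEmb)) k hk
    have hV : ∀ k : ℕ, 0 < k → CohZero (A V) (D V) k := by
      intro k hk
      have h1 : V = ⋂ i ∈ ({Fin.last (m + 1)} : Finset (Fin (m + 2))), Ωi i := by
        simp [hVdef]
      rw [h1]
      exact hgood _ ⟨_, Finset.mem_singleton_self _⟩ k hk
    have hUVI : ∀ k : ℕ, m + 1 ≤ k → CohZero (A (U ∩ V)) (D (U ∩ V)) k := by
      have hset : U ∩ V = ⋃ i : Fin (m + 1), (W i ∩ V) := by
        rw [hUdef, iUnion_inter]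
      rw [hset]
      refine IH (fun i => W i ∩ V) (fun i => (hopen _).inter hVo) ?_
      intro s hs k hk
      obtain ⟨i0, hi0⟩ := hs
      have h1 : (⋂ i ∈ s, (W i ∩ V)) =
          ⋂ j ∈ (s.map Fin.castSuccEmb ∪ {Fin.last (m + 1)}), Ωi j := by
        ext x
        simp only [hWdef, hVdef, mem_iInter, mem_inter_iff, Finset.mem_union,
          Finset.mem_map, Finset.mem_singleton, Fin.castSuccEmb]
        constructor
        · rintro h j (⟨i, hi, rfl⟩ | rfl)
          · exact (h i hi).1
          · exact (h i0 hi0).2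
        · intro h i hi
          exact ⟨h _ (Or.inl ⟨i, hi, rfl⟩), h _ (Or.inr rfl)⟩
      rw [h1]
      refine hgood _ ⟨Fin.last (m + 1), ?_⟩ k hk
      simp
    -- the diagram chase
    obtain ⟨j, rfl⟩ : ∃ j, k = j + 2 := ⟨k - 2, by omega⟩
    have hjm : m ≤ j := by omega
    simp only [CohZero]
    intro a ha
    obtain ⟨inj2, mid2, -⟩ := hMV U V hUo hVo (j + 2)
    obtain ⟨-, mid1, -⟩ := hMV U V hUo hVo (j + 1)
    obtain ⟨-, -, surj0⟩ := hMV U V hUo hVo j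
    -- restrict a to U and V and solve there
    have haU : D U (j + 2) (res U (U ∪ V) subset_union_left (j + 2) a) = 0 := by
      rw [hcomm, ha, map_zero]
    have haV : D V (j + 2) (res V (U ∪ V) subset_union_right (j + 2) a) = 0 := by
      rw [hcomm, ha, map_zero]
    have hU2 := hU (j + 2) (by omega)
    simp only [CohZero] at hU2
    obtain ⟨bU, hbU⟩ := hU2 _ haU
    have hV2 := hV (j + 2) (by omega)
    simp only [CohZero] at hV2
    obtain ⟨bV, hbV⟩ := hV2 _ haV
    set rUI := res (U ∩ V) U inter_subset_left with hrUI
    set rVI := res (U ∩ V) V inter_subset_right with hrVI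
    set c : A (U ∩ V) (j + 1) := rUI (j + 1) bU - rVI (j + 1) bV with hc
    have hres_a : rUI (j + 2) (res U (U ∪ V) subset_union_left (j + 2) a) =
        rVI (j + 2) (res V (U ∪ V) subset_union_right (j + 2) a) :=
      (mid2 _ _).mpr ⟨a, rfl, rfl⟩
    have hDc : D (U ∩ V) (j + 1) c = 0 := by
      rw [hc, map_sub, hcomm, hcomm, hbU, hbV, hres_a, sub_self]
    have hI := hUVI (j + 1) (by omega)
    simp only [CohZero] at hI
    obtain ⟨e, he⟩ := hI c hDc
    obtain ⟨fU, fV, hf⟩ := surj0 e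
    have hmatch : rUI (j + 1) (bU - D U j fU) = rVI (j + 1) (bV - D V j fV) := by
      rw [map_sub, map_sub, ← hcomm, ← hcomm, sub_eq_sub_iff_sub_eq_sub]
      rw [← hc, ← map_sub, hf, he]
    obtain ⟨b, hb1, hb2⟩ := (mid1 _ _).mp hmatch
    refine ⟨b, inj2 ?_⟩
    show (res U (U ∪ V) subset_union_left (j + 2) (D (U ∪ V) (j + 1) b),
          res V (U ∪ V) subset_union_right (j + 2) (D (U ∪ V) (j + 1) b)) =
         (res U (U ∪ V) subset_union_left (j + 2) a,
          res V (U ∪ V) subset_union_right (j + 2) a)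
    have h1 : res U (U ∪ V) subset_union_left (j + 2) (D (U ∪ V) (j + 1) b) =
        res U (U ∪ V) subset_union_left (j + 2) a := by
      rw [← hcomm, hb1, map_sub, hbU, hDD, sub_zero]
    have h2 : res V (U ∪ V) subset_union_right (j + 2) (D (U ∪ V) (j + 1) b) =
        res V (U ∪ V) subset_union_right (j + 2) a := by
      rw [← hcomm, hb2, map_sub, hbV, hDD, sub_zero]
    rw [h1, h2]


/-- Abstract good cover vanishing lemma: if a complex of sheaves
of real vector spaces satisfies the Mayer–Vietoris short exact sequence
property, and `Ω` has a good cover by `m` open sets (all nonempty finite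
intersections have vanishing cohomology in all positive degrees), then the
cohomology of the sections complex over `Ω` vanishes in all degrees `k ≥ m`. -/
theorem good_cover_vanishing
    (A : Set X → ℕ → Type)
    [∀ U k, AddCommGroup (A U k)] [∀ U k, Module ℝ (A U k)]
    (res : ∀ (U V : Set X), U ⊆ V → ∀ k, A V k →ₗ[ℝ] A U k)
    (D : ∀ (U : Set X) (k : ℕ), A U k →ₗ[ℝ] A U (k + 1))
    (hDD : ∀ (U : Set X) (k : ℕ) (a : A U k), D U (k + 1) (D U k a) = 0)
    (hcomm : ∀ (U V : Set X) (h : U ⊆ V) (k : ℕ) (a : A V k),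
      D U k (res U V h k a) = res U V h (k + 1) (D V k a))
    (hMV : MayerVietoris A res)
    (m : ℕ) (hm : 0 < m) (Ωi : Fin m → Set X) (hopen : ∀ i, IsOpen (Ωi i))
    (hgood : ∀ s : Finset (Fin m), s.Nonempty → ∀ k : ℕ, 0 < k →
      CohZero (A (⋂ i ∈ s, Ωi i)) (D (⋂ i ∈ s, Ωi i)) k) :
    ∀ k : ℕ, m ≤ k → CohZero (A (⋃ i, Ωi i)) (D (⋃ i, Ωi i)) k := by
  obtain ⟨m', rfl⟩ : ∃ m', m = m' + 1 := ⟨m - 1, by omega⟩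
  exact good_cover_vanishing_aux A res D hDD hcomm hMV m' Ωi hopen hgood
end
end

section
/- Extension lemma for superforms on polyhedral complexes: Let 𝒞 be a polyhedral complex in ℝ^r, Ω ⊂ |𝒞| open, and W ⊂ ℝ^r open with W ∩ |𝒞| = Ω. Then every superform on Ω (i.e., an equivalence class of superforms on open neighbourhoods V of Ω in ℝ^r, with V ∩ |𝒞| = Ω, identified when their restrictions to all polyhedra of 𝒞 agree on Ω) is the restriction of a superform in A^{p,q}(W). Equivalently: given V ⊂ W open with V ∩ |𝒞| = Ω and β ∈ A^{p,q}(V), there exists β̃ ∈ A^{p,q}(W) whose restriction to every σ ∩ Ω (σ ∈ 𝒞) agrees with that of β. -/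
open Set

noncomputable section

/-! Since `|𝒞|` is closed, `Ω = W ∩ |𝒞|` is closed in `W`, so `Ω` and `W \ V` are separated
sets. A smooth cutoff `f` on `W` equal to `1` on `Ω` and vanishing near `W \ V` makes `f β`,
extended by zero outside `V`, a superform on `W` which coincides with `β` on `Ω`. -/

open Filter Topology

lemma isAltML_zero {r n : ℕ} : IsAltML (fun _ : Fin n → Vec r => (0 : ℝ)) :=
  ⟨fun _ _ _ _ => by ring, fun _ _ _ _ => by ring, fun _ _ _ _ _ => rfl⟩

lemma IsAltML.const_mul_s19 {r n : ℕ} {g : (Fin n → Vec r) → ℝ} (hg : IsAltML g) (c : ℝ) :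
    IsAltML (fun v => c * g v) := by
  obtain ⟨hadd, hsmul, halt⟩ := hg
  refine ⟨fun v i x y => ?_, fun v i a x => ?_, fun v i j hij hv => ?_⟩
  · simp only [hadd]; ring
  · simp only [hsmul]; ring
  · simp only [halt v i j hij hv, mul_zero]

lemma IsPolyhedron.isClosed {r : ℕ} {σ : Set (Vec r)} (h : IsPolyhedron σ) : IsClosed σ := by
  obtain ⟨n, f, c, rfl⟩ := h
  simp only [ofPred_forall]
  exact isClosed_iInter fun i => isClosed_le (f i).continuous_of_finiteDimensional continuous_const

lemma PolyComplex.isClosed_support {r : ℕ} (C : PolyComplex r) : IsClosed C.support :=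
  C.finite.isClosed_biUnion fun σ hσ => (C.poly_mem σ hσ).isClosed

section SmoothCutoff

variable {E : Type*} [NormedAddCommGroup E] [NormedSpace ℝ E] [FiniteDimensional ℝ E] {n : ℕ∞}

/-- The quotient `g / (g + h)` of smooth functions with supports `O₁` and `O₂`. -/
theorem exists_contDiffOn_support_eq_eqOn_one {O₁ O₂ : Set E} (h₁ : IsOpen O₁)
    (h₂ : IsOpen O₂) :
    ∃ f : E → ℝ, ContDiffOn ℝ n f (O₁ ∪ O₂) ∧ Function.support f = O₁ ∧
      EqOn f 1 (O₁ \ O₂) := by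
  obtain ⟨g, hg_supp, hg, hg_range⟩ := h₁.exists_contDiff_support_eq (n := n)
  obtain ⟨h, hh_supp, hh, hh_range⟩ := h₂.exists_contDiff_support_eq (n := n)
  have hg0 : ∀ x, 0 ≤ g x := fun x => (hg_range (mem_range_self x)).1
  have hh0 : ∀ x, 0 ≤ h x := fun x => (hh_range (mem_range_self x)).1
  have hpos : ∀ x, g x ≠ 0 ∨ h x ≠ 0 → 0 < g x + h x := by
    rintro x (hgx | hhx)
    · exact add_pos_of_pos_of_nonneg ((hg0 x).lt_of_ne' hgx) (hh0 x)
    · exact add_pos_of_nonneg_of_pos (hg0 x) ((hh0 x).lt_of_ne' hhx)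
  refine ⟨g / (g + h), hg.contDiffOn.div (hg.add hh).contDiffOn fun x hx => ?_, ?_, ?_⟩
  · rw [← hg_supp, ← hh_supp] at hx
    exact (hpos x hx).ne'
  · ext x
    rw [← hg_supp, Function.mem_support, Function.mem_support, Pi.div_apply,
      div_ne_zero_iff]
    exact ⟨And.left, fun hgx => ⟨hgx, (hpos x (.inl hgx)).ne'⟩⟩
  · rintro x ⟨hx₁, hx₂⟩
    rw [← hg_supp] at hx₁
    rw [← hh_supp, Function.notMem_support] at hx₂
    simp only [Pi.div_apply, Pi.add_apply, hx₂, add_zero, div_self hx₁, Pi.one_apply]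

/-- `s` and `W \ U` are separated sets, so complete normality gives them disjoint open
neighbourhoods `O₁ ⊇ s` and `O₃ ⊇ W \ U`; a cutoff with support `O₁` equal to `1` off
`closure s` does the job. -/
theorem exists_contDiffOn_eqOn_one_eventuallyEq_zero {s U W : Set E} (hU : IsOpen U)
    (hsU : s ⊆ U) (hs : closure s ∩ W ⊆ s) :
    ∃ f : E → ℝ, ContDiffOn ℝ n f W ∧ EqOn f 1 s ∧ ∀ x ∈ W \ U, f =ᶠ[𝓝 x] 0 := by
  have hsep : Disjoint (𝓝ˢ s) (𝓝ˢ (W \ U)) := by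
    refine completely_normal (disjoint_left.2 fun x hx hx' => hx'.2 (hsU (hs ⟨hx, hx'.1⟩)))
      (disjoint_left.2 fun x hx hx' => ?_)
    exact closure_minimal (fun y hy => hy.2) hU.isClosed_compl hx' (hsU hx)
  obtain ⟨O₁, O₃, hO₁, hO₃, hsO₁, hO₃', hdisj⟩ := separatedNhds_iff_disjoint.2 hsep
  obtain ⟨f, hf, hf_supp, hf_one⟩ :=
    exists_contDiffOn_support_eq_eqOn_one (n := n) hO₁ isClosed_closure.isOpen_compl
  have hW : W ⊆ O₁ ∪ (closure s)ᶜ := fun x hxW => by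
    by_cases hx : x ∈ closure s
    · exact .inl (hsO₁ (hs ⟨hx, hxW⟩))
    · exact .inr hx
  refine ⟨f, hf.mono hW, fun x hx => hf_one ⟨hsO₁ hx, not_not.2 (subset_closure hx)⟩,
    fun x hx => ?_⟩
  filter_upwards [hO₃.mem_nhds (hO₃' hx)] with y hy
  exact Function.notMem_support.1 fun hy' => disjoint_left.1 hdisj (hf_supp ▸ hy') hy

end SmoothCutoff

theorem contDiffOn_indicator_smul {𝕜 E F : Type*} [NontriviallyNormedField 𝕜]
    [NormedAddCommGroup E] [NormedSpace 𝕜 E] [NormedAddCommGroup F] [NormedSpace 𝕜 F]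
    {n : WithTop ℕ∞} {V W : Set E} {f : E → 𝕜} {b : E → F} (hV : IsOpen V)
    (hf : ContDiffOn 𝕜 n f W) (hb : ContDiffOn 𝕜 n b V) (hf0 : ∀ x ∈ W \ V, f =ᶠ[𝓝 x] 0) :
    ContDiffOn 𝕜 n (V.indicator fun y => f y • b y) W := by
  intro x hxW
  by_cases hxV : x ∈ V
  · have hfb : ContDiffWithinAt 𝕜 n (fun y => f y • b y) (W ∩ V) x :=
      (hf.mono inter_subset_left).smul (hb.mono inter_subset_right) x ⟨hxW, hxV⟩
    refine (hfb.mono_of_mem_nhdsWithin (inter_mem_nhdsWithin W (hV.mem_nhds hxV))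
      ).congr_of_eventuallyEq ?_ (indicator_of_mem hxV _)
    filter_upwards [nhdsWithin_le_nhds (hV.mem_nhds hxV)] with y hy using indicator_of_mem hy _
  · refine (contDiffAt_const (c := (0 : F))).congr_of_eventuallyEq ?_ |>.contDiffWithinAt
    filter_upwards [hf0 x ⟨hxW, hxV⟩] with y hy
    by_cases hyV : y ∈ V <;> simp [hyV, hy]

theorem IsSuperformOn.indicator_smul {r p q : ℕ} {V W : Set (Vec r)} {β : SFd r p q}
    {f : Vec r → ℝ} (hβ : IsSuperformOn V β) (hV : IsOpen V) (hf : ContDiffOn ℝ (⊤ : ℕ∞) f W)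
    (hf0 : ∀ x ∈ W \ V, f =ᶠ[𝓝 x] 0) :
    IsSuperformOn W fun x v w => V.indicator (fun y => f y • β y v w) x := by
  refine ⟨fun x _ w => ?_, fun x _ v => ?_,
    fun v w => contDiffOn_indicator_smul hV hf (hβ.2.2 v w) hf0⟩
  · by_cases hx : x ∈ V
    · simpa only [indicator_of_mem hx, smul_eq_mul] using (hβ.1 x hx w).const_mul_s19 (f x)
    · simpa only [indicator_of_notMem hx] using isAltML_zero
  · by_cases hx : x ∈ V
    · simpa only [indicator_of_mem hx, smul_eq_mul] using (hβ.2.1 x hx v).const_mul_s19 (f x)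
    · simpa only [indicator_of_notMem hx] using isAltML_zero

theorem superform_extension_general {r p q : ℕ} (C : PolyComplex r)
    (Ω W V : Set (Vec r)) (hWΩ : W ∩ C.support = Ω)
    (hV : IsOpen V) (hVΩ : V ∩ C.support = Ω)
    (β : SFd r p q) (hβ : IsSuperformOn V β) :
    ∃ βt : SFd r p q, IsSuperformOn W βt ∧
      ∀ σ ∈ C.polys, ∀ x ∈ σ ∩ Ω, ∀ (v : Fin p → Vec r) (w : Fin q → Vec r),
        (∀ i, v i ∈ vectorSpan ℝ σ) → (∀ j, w j ∈ vectorSpan ℝ σ) →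
        βt x v w = β x v w := by
  have hΩV : Ω ⊆ V := hVΩ ▸ inter_subset_left
  have hΩ_closed_in_W : closure Ω ∩ W ⊆ Ω := by
    have hclΩ : closure Ω ⊆ C.support :=
      closure_minimal (hWΩ ▸ inter_subset_right) C.isClosed_support
    exact fun x hx => hWΩ ▸ ⟨hx.2, hclΩ hx.1⟩
  obtain ⟨f, hf, hf_one, hf_zero⟩ :=
    exists_contDiffOn_eqOn_one_eventuallyEq_zero (n := ⊤) hV hΩV hΩ_closed_in_W
  refine ⟨_, hβ.indicator_smul hV hf hf_zero, fun σ _ x hx v w _ _ => ?_⟩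
  simp only [indicator_of_mem (hΩV hx.2), hf_one hx.2, Pi.one_apply, one_smul]

/-- Extension lemma: for `W ⊆ ℝ^r` open with `W ∩ |𝒞| = Ω`,
every superform on `Ω` — given by some `β ∈ A^{p,q}(V)` on an open `V ⊆ W` with
`V ∩ |𝒞| = Ω` — is the restriction of a superform `β̃ ∈ A^{p,q}(W)`, i.e. `β̃`
agrees with `β` on every `σ ∩ Ω` (`σ ∈ 𝒞`) when evaluated on tangent vectors
from the linear span `L_σ`. -/
theorem superform_extension {r p q : ℕ} (C : PolyComplex r)
    (Ω W V : Set (Vec r)) (hW : IsOpen W) (hWΩ : W ∩ C.support = Ω)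
    (hV : IsOpen V) (hVW : V ⊆ W) (hVΩ : V ∩ C.support = Ω)
    (β : SFd r p q) (hβ : IsSuperformOn V β) :
    ∃ βt : SFd r p q, IsSuperformOn W βt ∧
      ∀ σ ∈ C.polys, ∀ x ∈ σ ∩ Ω, ∀ (v : Fin p → Vec r) (w : Fin q → Vec r),
        (∀ i, v i ∈ vectorSpan ℝ σ) → (∀ j, w j ∈ vectorSpan ℝ σ) →
        βt x v w = β x v w :=
  superform_extension_general C Ω W V hWΩ hV hVΩ β hβ
end
end
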